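/- arXiv:2204.01569 — 9 statements merged into one kernel-verified Lean document; each statement's English description precedes it below -/
import Mathlib

section
/- Let (h, ω) be a symplectic Lie algebra. The product defined by ω(x*y, z) = -ω(y, [x,z]) for all x,y,z ∈ h is left-symmetric (i.e., its associator is symmetric in the first two arguments) and satisfies x*y - y*x = [x,y]. -/
/-- On a symplectic Lie algebra `(h, ω)`, the product defined by
`ω(x*y, z) = -ω(y, [x,z])` is left-symmetric and satisfies `x*y - y*x = [x,y]`. -/
theorem symplectic_left_symmetric {h : Type*} [LieRing h] [LieAlgebra ℝ h]
    [Module.Finite ℝ h]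
    (ω : h →ₗ[ℝ] h →ₗ[ℝ] ℝ)
    (hskew : ∀ x y : h, ω x y = - ω y x)
    (hcocycle : ∀ x y z : h, ω ⁅x, y⁆ z + ω ⁅y, z⁆ x + ω ⁅z, x⁆ y = 0)
    (hnd : ∀ x : h, (∀ y : h, ω x y = 0) → x = 0)
    (mul : h → h → h)
    (hmul : ∀ x y z : h, ω (mul x y) z = - ω y ⁅x, z⁆) :
    (∀ x y z : h,
        mul (mul x y) z - mul x (mul y z) = mul (mul y x) z - mul y (mul x z)) ∧
    (∀ x y : h, mul x y - mul y x = ⁅x, y⁆) := by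
  have key2 : ∀ x y : h, mul x y - mul y x = ⁅x, y⁆ := by
    intro x y
    have hz : ∀ w : h, ω (mul x y - mul y x - ⁅x, y⁆) w = 0 := by
      intro w
      have h1 := hmul x y w
      have h2 := hmul y x w
      have h3 := hcocycle x y w
      have e1 : ω ⁅y, w⁆ x = - ω x ⁅y, w⁆ := hskew _ _
      have e2 : ω ⁅w, x⁆ y = ω y ⁅x, w⁆ := by
        have hl : ⁅w, x⁆ = -⁅x, w⁆ := by rw [← lie_skew]
        rw [hl, map_neg, LinearMap.neg_apply, hskew]; ring
      simp only [map_sub, LinearMap.sub_apply]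
      linarith
    have := hnd _ hz
    rwa [sub_eq_zero] at this
  refine ⟨?_, key2⟩
  intro x y z
  have hz : ∀ w : h,
      ω (mul (mul x y) z - mul x (mul y z) - (mul (mul y x) z - mul y (mul x z))) w = 0 := by
    intro w
    have h1 := hmul (mul x y) z w
    have h2 := hmul (mul y x) z w
    have h3 := hmul x (mul y z) w
    have h4 := hmul y (mul x z) w
    have h5 := hmul y z ⁅x, w⁆
    have h6 := hmul x z ⁅y, w⁆
    have hb : ⁅mul x y, w⁆ - ⁅mul y x, w⁆ = ⁅x, ⁅y, w⁆⁆ - ⁅y, ⁅x, w⁆⁆ := by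
      rw [← sub_lie, key2, lie_lie]
    have hωb := congrArg (ω z) hb
    simp only [map_sub] at hωb
    simp only [map_sub, LinearMap.sub_apply]
    linarith
  have := hnd _ hz
  rwa [sub_eq_zero] at this
end

section
/- Let (g, α, ω) be a cosymplectic Lie algebra with Reeb vector ξ and h = ker α, and let * be the left-symmetric product on (h, ω_h) given by ω(x*y,z) = -ω(y,[x,z]). Then ad_ξ is a derivation of the product *: for all x, y ∈ h, ad_ξ(x*y) = (ad_ξ x)*y + x*(ad_ξ y). -/
/-- In a cosymplectic Lie algebra `(g, α, ω)` with Reeb vector `ξ`,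
`ad_ξ` is a derivation of the left-symmetric product `*` of the symplectic
Lie algebra `(h = ker α, ω_h)`. -/
theorem ad_reeb_derivation {g : Type*} [LieRing g] [LieAlgebra ℝ g]
    [Module.Finite ℝ g] (n : ℕ) (hdim : Module.finrank ℝ g = 2 * n + 1)
    (α : g →ₗ[ℝ] ℝ) (ω : g →ₗ[ℝ] g →ₗ[ℝ] ℝ)
    (hskew : ∀ x y : g, ω x y = - ω y x)
    (hclosed : ∀ x y : g, α ⁅x, y⁆ = 0)
    (hcocycle : ∀ x y z : g, ω ⁅x, y⁆ z + ω ⁅y, z⁆ x + ω ⁅z, x⁆ y = 0)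
    (hnd : Function.Bijective fun x : g => ω x + α x • α)
    (ξ : g) (hξ1 : α ξ = 1) (hξ2 : ω ξ = 0)
    (smul : g → g → g)
    (hsmul_mem : ∀ x y : g, α x = 0 → α y = 0 → α (smul x y) = 0)
    (hsmul : ∀ x y z : g, α x = 0 → α y = 0 → α z = 0 →
        ω (smul x y) z = - ω y ⁅x, z⁆) :
    ∀ x y : g, α x = 0 → α y = 0 →
      ⁅ξ, smul x y⁆ = smul ⁅ξ, x⁆ y + smul x ⁅ξ, y⁆ := by
  intro x y hx hy
  have hξx : α ⁅ξ, x⁆ = 0 := hclosed ξ x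
  have hξy : α ⁅ξ, y⁆ = 0 := hclosed ξ y
  set s := smul x y with hs
  have hαs : α s = 0 := hsmul_mem x y hx hy
  set u := ⁅ξ, s⁆ - (smul ⁅ξ, x⁆ y + smul x ⁅ξ, y⁆) with hu
  have hαu : α u = 0 := by
    simp [hu, map_sub, map_add, hclosed, hsmul_mem _ _ hξx hy,
      hsmul_mem _ _ hx hξy]
  have key : ∀ z : g, α z = 0 → ω u z = 0 := by
    intro z hz
    have hξz : α ⁅ξ, z⁆ = 0 := hclosed ξ z
    -- ω ⁅ξ, s⁆ z = - ω s ⁅ξ, z⁆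
    have h1 : ω ⁅ξ, s⁆ z = - ω s ⁅ξ, z⁆ := by
      have hc := hcocycle ξ s z
      have e1 : ω ⁅s, z⁆ ξ = 0 := by rw [hskew]; simp [hξ2]
      have e2 : ω ⁅z, ξ⁆ s = ω s ⁅ξ, z⁆ := by
        rw [hskew ⁅z, ξ⁆ s]
        have hzneg : ⁅z, ξ⁆ = -⁅ξ, z⁆ := by rw [← lie_skew]
        rw [hzneg, map_neg, neg_neg]
      linarith
    have h2 : ω s ⁅ξ, z⁆ = - ω y ⁅x, ⁅ξ, z⁆⁆ := hsmul x y ⁅ξ, z⁆ hx hy hξz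
    have h3 : ω (smul ⁅ξ, x⁆ y) z = - ω y ⁅⁅ξ, x⁆, z⁆ :=
      hsmul ⁅ξ, x⁆ y z hξx hy hz
    have h4 : ω (smul x ⁅ξ, y⁆) z = - ω ⁅ξ, y⁆ ⁅x, z⁆ :=
      hsmul x ⁅ξ, y⁆ z hx hξy hz
    have h5 : ω ⁅ξ, y⁆ ⁅x, z⁆ = - ω y ⁅ξ, ⁅x, z⁆⁆ := by
      have hc := hcocycle ξ y ⁅x, z⁆
      have e1 : ω ⁅y, ⁅x, z⁆⁆ ξ = 0 := by rw [hskew]; simp [hξ2]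
      have e2 : ω ⁅⁅x, z⁆, ξ⁆ y = ω y ⁅ξ, ⁅x, z⁆⁆ := by
        have hzneg : ⁅⁅x, z⁆, ξ⁆ = -⁅ξ, ⁅x, z⁆⁆ := by rw [← lie_skew]
        rw [hzneg, map_neg, LinearMap.neg_apply, hskew, neg_neg]
      linarith
    have hjac : ω y ⁅ξ, ⁅x, z⁆⁆ = ω y ⁅⁅ξ, x⁆, z⁆ + ω y ⁅x, ⁅ξ, z⁆⁆ := by
      rw [leibniz_lie, map_add]
    have hexp : ω u z = ω ⁅ξ, s⁆ z - ω (smul ⁅ξ, x⁆ y) z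
        - ω (smul x ⁅ξ, y⁆) z := by
      simp [hu, map_sub, map_add]; ring
    rw [hexp, h1, h2, h3, h4, h5]
    linarith
  have hωuξ : ω u ξ = 0 := by rw [hskew]; simp [hξ2]
  have hωu : ω u = 0 := by
    ext z
    have hz' : α (z - α z • ξ) = 0 := by simp [hξ1]
    have := key (z - α z • ξ) hz'
    rw [map_sub, map_smul] at this
    simp only [LinearMap.zero_apply]
    have : ω u z - α z * ω u ξ = 0 := by simpa using this
    rw [hωuξ] at this
    linarith
  have hinj := hnd.injective (a₁ := u) (a₂ := 0)
  have h0 : (fun x : g => ω x + α x • α) u = (fun x : g => ω x + α x • α) 0 := by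
    simp [hωu, hαu]
  have hu0 : u = 0 := hinj h0
  have := sub_eq_zero.mp hu0
  exact this
end

section
/- Let (g, α, ω) be a cosymplectic Lie algebra with Reeb vector ξ and Φ(x) = ι_x ω + α(x)α. The product on g defined by Φ(x·y)(z) = -Φ(y)([x,z]) for all x,y,z ∈ g is a left-symmetric product on g. -/
/-- In a cosymplectic Lie algebra `(g, α, ω)`, the product on `g`
defined by `Φ(x·y)(z) = -Φ(y)([x,z])`, where `Φ(x) = ι_x ω + α(x) α`, is a
left-symmetric product. -/
theorem cosymplectic_left_symmetric {g : Type*} [LieRing g] [LieAlgebra ℝ g]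
    [Module.Finite ℝ g] (n : ℕ) (hdim : Module.finrank ℝ g = 2 * n + 1)
    (α : g →ₗ[ℝ] ℝ) (ω : g →ₗ[ℝ] g →ₗ[ℝ] ℝ)
    (hskew : ∀ x y : g, ω x y = - ω y x)
    (hclosed : ∀ x y : g, α ⁅x, y⁆ = 0)
    (hcocycle : ∀ x y z : g, ω ⁅x, y⁆ z + ω ⁅y, z⁆ x + ω ⁅z, x⁆ y = 0)
    (hnd : Function.Bijective fun x : g => ω x + α x • α)
    (mul : g → g → g)
    (hmul : ∀ x y z : g,
        ω (mul x y) z + α (mul x y) * α z = - (ω y ⁅x, z⁆ + α y * α ⁅x, z⁆)) :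
    ∀ x y z : g,
      mul (mul x y) z - mul x (mul y z) = mul (mul y x) z - mul y (mul x z) := by
  intro x y z
  set Φ : g →ₗ[ℝ] g →ₗ[ℝ] ℝ := ω + α.smulRight α with hΦ
  have hΦdef : ∀ a b : g, Φ a b = ω a b + α a * α b := by
    intro a b
    simp [hΦ, smul_eq_mul, mul_comm]
  have hinj : Function.Injective Φ := by
    have he : (fun x : g => ω x + α x • α) = fun x : g => Φ x := by
      funext a; simp [hΦ]
    intro a b hab
    exact hnd.injective (by simpa only [hΦ, LinearMap.add_apply, LinearMap.smulRight_apply]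
      using hab)
  have hmul' : ∀ a b w : g, Φ (mul a b) w = - Φ b ⁅a, w⁆ := by
    intro a b w
    rw [hΦdef, hΦdef]
    exact hmul a b w
  -- commutator of the product is the Lie bracket
  have hcomm : ∀ a b : g, mul a b - mul b a = ⁅a, b⁆ := by
    intro a b
    apply hinj
    ext w
    rw [map_sub]
    simp only [LinearMap.sub_apply, hmul']
    rw [hΦdef, hΦdef, hΦdef, hclosed, hclosed, hclosed]
    have h1 := hcocycle a b w
    have h2 := hskew b ⁅a, w⁆
    have h3 := hskew a ⁅b, w⁆
    have h4 : ω ⁅a, w⁆ b = - ω ⁅w, a⁆ b := by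
      have hba : (⁅a, w⁆ : g) = -⁅w, a⁆ := (lie_skew a w).symm
      rw [hba, map_neg, LinearMap.neg_apply]
    linarith
  -- additivity in the left argument (for differences)
  have hL : ∀ a b c : g, mul (a - b) c = mul a c - mul b c := by
    intro a b c
    apply hinj
    ext w
    rw [map_sub]
    simp only [LinearMap.sub_apply, hmul', sub_lie, map_sub]
    ring
  -- key identity: mul ⁅x,y⁆ z = mul x (mul y z) - mul y (mul x z)
  have hkey : mul ⁅x, y⁆ z = mul x (mul y z) - mul y (mul x z) := by
    apply hinj
    ext w
    rw [map_sub]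
    simp only [LinearMap.sub_apply, hmul']
    rw [lie_lie, map_sub]
    ring
  have : mul (mul x y) z - mul (mul y x) z = mul x (mul y z) - mul y (mul x z) := by
    rw [← hL, hcomm, hkey]
  exact sub_eq_sub_iff_sub_eq_sub.mpr this
end

section
/- Let (g, α, ω) be a cosymplectic Lie algebra with Reeb vector ξ and h = ker α. Let · be the product on g defined by Φ(x·y)(z) = -Φ(y)([x,z]), and * the left-symmetric product on h defined by ω(x*y,z) = -ω(y,[x,z]). Then for x,y ∈ h: x·y = x*y + ω(x, [ξ,y])ξ; and for all x ∈ g: ξ·x = [ξ,x] and x·ξ = 0. -/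
/-- Characterization of the product `·` on a cosymplectic Lie
algebra `(g, α, ω)` with Reeb vector `ξ`: for `x, y ∈ h = ker α` one has
`x·y = x*y + ω(x, [ξ,y]) ξ`, and for all `x ∈ g`, `ξ·x = [ξ,x]`, `x·ξ = 0`. -/
theorem cosymplectic_product_formulas {g : Type*} [LieRing g] [LieAlgebra ℝ g]
    [Module.Finite ℝ g] (n : ℕ) (hdim : Module.finrank ℝ g = 2 * n + 1)
    (α : g →ₗ[ℝ] ℝ) (ω : g →ₗ[ℝ] g →ₗ[ℝ] ℝ)
    (hskew : ∀ x y : g, ω x y = - ω y x)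
    (hclosed : ∀ x y : g, α ⁅x, y⁆ = 0)
    (hcocycle : ∀ x y z : g, ω ⁅x, y⁆ z + ω ⁅y, z⁆ x + ω ⁅z, x⁆ y = 0)
    (hnd : Function.Bijective fun x : g => ω x + α x • α)
    (ξ : g) (hξ1 : α ξ = 1) (hξ2 : ω ξ = 0)
    (mul : g → g → g)
    (hmul : ∀ x y z : g,
        ω (mul x y) z + α (mul x y) * α z = - (ω y ⁅x, z⁆ + α y * α ⁅x, z⁆))
    (smul : g → g → g)
    (hsmul_mem : ∀ x y : g, α x = 0 → α y = 0 → α (smul x y) = 0)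
    (hsmul : ∀ x y z : g, α x = 0 → α y = 0 → α z = 0 →
        ω (smul x y) z = - ω y ⁅x, z⁆) :
    (∀ x y : g, α x = 0 → α y = 0 → mul x y = smul x y + ω x ⁅ξ, y⁆ • ξ) ∧
    (∀ x : g, mul ξ x = ⁅ξ, x⁆) ∧
    (∀ x : g, mul x ξ = 0) := by
  have hlie : ∀ a b : g, (⁅a, b⁆ : g) = -⁅b, a⁆ := by
    intro a b
    rw [← lie_skew b a, neg_neg]
  have hinj : ∀ a b : g, (∀ z, ω a z + α a * α z = ω b z + α b * α z) → a = b := by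
    intro a b h
    apply hnd.injective
    ext z
    simpa using h z
  have key : ∀ x y : g, ω ⁅ξ, x⁆ y = ω ⁅ξ, y⁆ x := by
    intro x y
    have h1 := hcocycle ξ x y
    have h2 : ω ⁅x, y⁆ ξ = 0 := by rw [hskew, hξ2]; simp
    have h3 : ω ⁅y, ξ⁆ x = - ω ⁅ξ, y⁆ x := by rw [hlie y ξ, map_neg]; exact LinearMap.neg_apply _ _
    linarith
  refine ⟨?_, ?_, ?_⟩
  · intro x y hx hy
    apply hinj
    intro z
    have hz : α (z - α z • ξ) = 0 := by simp [hξ1]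
    have hs := hsmul x y (z - α z • ξ) hx hy hz
    have hαs := hsmul_mem x y hx hy
    have hωξ : ω (smul x y) ξ = 0 := by rw [hskew, hξ2]; simp
    have hw : ω y ⁅x, ξ⁆ = - ω x ⁅ξ, y⁆ := by
      have h4 : ω y ⁅ξ, x⁆ = ω x ⁅ξ, y⁆ := by
        rw [hskew y, key x y, hskew]; ring
      rw [hlie x ξ, map_neg]; linarith [h4]
    have hmu := hmul x y z
    have hsz : ω (smul x y) z = - ω y ⁅x, z⁆ - α z * ω x ⁅ξ, y⁆ := by
      have hexp : ω (smul x y) (z - α z • ξ) = ω (smul x y) z - α z * ω (smul x y) ξ := by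
        simp [mul_comm]
      have hlexp : ω y ⁅x, z - α z • ξ⁆ = ω y ⁅x, z⁆ - α z * ω y ⁅x, ξ⁆ := by
        simp [mul_comm]
      rw [hexp, hlexp, hωξ, hw] at hs
      linarith
    have hrhs : ω (smul x y + ω x ⁅ξ, y⁆ • ξ) z + α (smul x y + ω x ⁅ξ, y⁆ • ξ) * α z =
        ω (smul x y) z + ω x ⁅ξ, y⁆ * α z := by
      simp [hαs, hξ1, hξ2]
    rw [hrhs, hsz, hmu, hy]
    ring
  · intro x
    apply hinj
    intro z
    have hmu := hmul ξ x z
    have h2 : ω ⁅x, z⁆ ξ = 0 := by rw [hskew, hξ2]; simp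
    have h1 := hcocycle ξ x z
    have h3 : ω ⁅z, ξ⁆ x = - ω ⁅ξ, z⁆ x := by rw [hlie z ξ, map_neg]; exact LinearMap.neg_apply _ _
    have h4 : ω ⁅ξ, z⁆ x = - ω x ⁅ξ, z⁆ := hskew _ _
    rw [hmu, hclosed ξ z, hclosed ξ x]
    nlinarith
  · intro x
    apply hinj
    intro z
    have hmu := hmul x ξ z
    rw [hmu, hξ2, hξ1, hclosed x z]
    simp
end

section
/- Let ḡ be a Lie algebra with a 1-form ᾱ and 2-form ω̄, and set g = ḡ ⊕ ⟨e⟩ (direct sum Lie algebra with e central and bracketing to zero) with 2-form ω = ω̄ + ᾱ∧e*. Then (ḡ, ᾱ, ω̄) is a cosymplectic Lie algebra if and only if (g, ω) is a symplectic Lie algebra. -/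
open Module

/-- A skew bilinear form on an odd-dimensional real space is degenerate:
the map `x ↦ ω x` to the dual cannot be injective. -/
lemma skew_not_injective_aux {g : Type*} [AddCommGroup g] [Module ℝ g] [Module.Finite ℝ g]
    (n : ℕ) (hdim : Module.finrank ℝ g = 2 * n + 1)
    (ω : g →ₗ[ℝ] g →ₗ[ℝ] ℝ) (hskew : ∀ x y : g, ω x y = - ω y x) :
    ¬ Function.Injective (fun x : g => ω x) := by
  haveI : FiniteDimensional ℝ g := inferInstance
  let b : Basis (Fin (2 * n + 1)) ℝ g := (Module.finBasis ℝ g).reindex (finCongr hdim)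
  let M : Matrix (Fin (2 * n + 1)) (Fin (2 * n + 1)) ℝ :=
    Matrix.of fun i j => ω (b i) (b j)
  have hdet : M.det = 0 := by
    have hMT : M.transpose = -M := by
      ext i j
      simp only [Matrix.transpose_apply, Matrix.neg_apply, M, Matrix.of_apply]
      exact hskew (b j) (b i)
    have h1 : M.det = (-M).det := by rw [← hMT, Matrix.det_transpose]
    rw [Matrix.det_neg, Fintype.card_fin] at h1
    have : ((-1 : ℝ)) ^ (2 * n + 1) = -1 := by
      rw [pow_succ, pow_mul]; norm_num
    rw [this] at h1
    linarith
  obtain ⟨v, hv0, hMv⟩ := (Matrix.exists_mulVec_eq_zero_iff).2 hdet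
  set x : g := b.equivFun.symm v with hxdef
  have hx0 : x ≠ 0 := by
    intro h
    exact hv0 (b.equivFun.symm.injective (by rw [← hxdef, h]; simp))
  have hbx : ∀ i, ω (b i) x = 0 := by
    intro i
    have h := congrFun hMv i
    have hx : x = ∑ j, v j • b j := by
      rw [hxdef, Basis.equivFun_symm_apply]
    rw [hx]
    simp only [map_sum, map_smul, smul_eq_mul]
    rw [show (0 : ℝ) = (0 : Fin (2*n+1) → ℝ) i from rfl, ← h]
    simp [Matrix.mulVec, dotProduct, M, mul_comm]
  have hyx : ∀ y, ω y x = 0 := by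
    intro y
    have hflip : (ω.flip x) = 0 := by
      apply b.ext
      intro i
      simp [LinearMap.flip_apply, hbx i]
    simpa using LinearMap.congr_fun hflip y
  have hωx : ω x = 0 := by
    ext y
    rw [hskew x y, hyx y, neg_zero]
    rfl
  intro hinj
  exact hx0 (hinj (by simpa using hωx))

/-- `(ḡ, ᾱ, ω̄)` is cosymplectic iff `(g = ḡ ⊕ ⟨e⟩, ω = ω̄ + ᾱ∧e*)`
is symplectic. An element of `g` is a pair `(x, s)` standing for `x + s·e`,
with `e` central, so the bracket is `[(x,s),(y,u)] = ([x,y], 0)`. -/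
theorem cosymplectic_iff_central_extension_symplectic {g : Type*} [LieRing g]
    [LieAlgebra ℝ g] [Module.Finite ℝ g] (n : ℕ)
    (hdim : Module.finrank ℝ g = 2 * n + 1)
    (α : g →ₗ[ℝ] ℝ) (ω : g →ₗ[ℝ] g →ₗ[ℝ] ℝ)
    (hskew : ∀ x y : g, ω x y = - ω y x)
    (Ω : (g × ℝ) → (g × ℝ) → ℝ)
    (hΩ : ∀ X Y : g × ℝ, Ω X Y = ω X.1 Y.1 + α X.1 * Y.2 - X.2 * α Y.1) :
    ((∀ x y : g, α ⁅x, y⁆ = 0) ∧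
     (∀ x y z : g, ω ⁅x, y⁆ z + ω ⁅y, z⁆ x + ω ⁅z, x⁆ y = 0) ∧
     Function.Bijective (fun x : g => ω x + α x • α)) ↔
    ((∀ X Y Z : g × ℝ,
        Ω (⁅X.1, Y.1⁆, 0) Z + Ω (⁅Y.1, Z.1⁆, 0) X + Ω (⁅Z.1, X.1⁆, 0) Y = 0) ∧
     (∀ X : g × ℝ, (∀ Y : g × ℝ, Ω X Y = 0) → X = 0)) := by
  haveI : FiniteDimensional ℝ g := inferInstance
  have hωxx : ∀ x : g, ω x x = 0 := fun x => by
    have := hskew x x; linarith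
  constructor
  · rintro ⟨h1, h2, h3⟩
    constructor
    · intro X Y Z
      simp only [hΩ, h1]
      have := h2 X.1 Y.1 Z.1
      ring_nf
      ring_nf at this
      linarith
    · rintro ⟨x, s⟩ hX
      have hxy : ∀ y, ω x y = s * α y := by
        intro y
        have := hX (y, 0)
        rw [hΩ] at this
        simp at this
        linarith
      have hax : α x = 0 := by
        have := hX (0, 1)
        rw [hΩ] at this
        simpa using this
      obtain ⟨z, hz⟩ := h3.2 α
      have hzy : ∀ y, ω z y + α z * α y = α y := fun y => by
        have := congrArg (fun f => f y) hz
        simpa using this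
      have hz01 : α z = 0 ∨ α z = 1 := by
        have hzz := hzy z
        rw [hωxx z] at hzz
        have : α z * (α z - 1) = 0 := by nlinarith
        rcases mul_eq_zero.1 this with h | h
        · exact Or.inl h
        · exact Or.inr (by linarith)
      rcases hz01 with h0 | h1
      · exfalso
        have hωz : ∀ y, ω z y = α y := fun y => by
          have := hzy y; rw [h0] at this; linarith
        apply skew_not_injective_aux n hdim ω hskew
        intro a c hac
        have key : ∀ w : g, (fun x : g => ω x + α x • α) (w - α w • z) = ω w := by
          intro w
          ext y
          simp only [map_sub, map_smul, LinearMap.add_apply, LinearMap.sub_apply,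
            LinearMap.smul_apply, smul_eq_mul]
          rw [hωz y, h0]
          ring
        have haw : ∀ w : g, α (w - α w • z) = α w := by
          intro w
          simp [h0]
        have : (fun x : g => ω x + α x • α) (a - α a • z)
             = (fun x : g => ω x + α x • α) (c - α c • z) := by
          rw [key a, key c]; exact hac
        have heq := h3.1 this
        have : a - α a • z + α a • z = c - α c • z + α c • z := by
          rw [heq]
          have : α a = α c := by
            have := congrArg α heq
            rw [haw a, haw c] at this
            exact this
          rw [this]
        simpa using this
      · have hTsz : (fun x : g => ω x + α x • α) (s • z)
            = (fun x : g => ω x + α x • α) x := by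
          ext y
          simp only [map_smul, LinearMap.add_apply, LinearMap.smul_apply, smul_eq_mul]
          have hz0 : ω z y = 0 := by
            have := hzy y; rw [h1] at this; linarith
          rw [hxy y, hax, h1, hz0]
          ring
        have hxsz : s • z = x := h3.1 hTsz
        have hs : s = 0 := by
          have := congrArg α hxsz
          simp only [map_smul, smul_eq_mul, h1, mul_one] at this
          rw [this, hax]
        have hx : x = 0 := by rw [← hxsz, hs, zero_smul]
        simp [hx, hs]
  · rintro ⟨H1, H2⟩
    have hα : ∀ x y : g, α ⁅x, y⁆ = 0 := by
      intro x y
      have := H1 (x, 0) (y, 0) (0, 1)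
      simp only [hΩ] at this
      simpa using this
    refine ⟨hα, ?_, ?_⟩
    · intro x y z
      have := H1 (x, 0) (y, 0) (z, 0)
      simp only [hΩ] at this
      simpa using this
    · let T : g →ₗ[ℝ] (g →ₗ[ℝ] ℝ) :=
        { toFun := fun x => ω x + α x • α
          map_add' := fun x y => LinearMap.ext fun w => by
            simp only [map_add, LinearMap.add_apply, LinearMap.smul_apply, smul_eq_mul]
            ring
          map_smul' := fun c x => LinearMap.ext fun w => by
            simp only [map_smul, RingHom.id_apply, LinearMap.add_apply,
              LinearMap.smul_apply, smul_eq_mul]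
            ring }
      have hinj : Function.Injective T := by
        rw [← LinearMap.ker_eq_bot, LinearMap.ker_eq_bot']
        intro x hx
        have hxy : ∀ y, ω x y + α x * α y = 0 := by
          intro y
          have := congrArg (fun f => f y) hx
          simpa [T] using this
        have hax : α x = 0 := by
          have := hxy x
          rw [hωxx x] at this
          nlinarith
        have hωxy : ∀ y, ω x y = 0 := fun y => by
          have := hxy y; rw [hax] at this; linarith
        have := H2 (x, 0) (fun Y => by rw [hΩ]; simp [hωxy, hax])
        exact congrArg Prod.fst this
      have hsurj : Function.Surjective T := by
        rw [← LinearMap.injective_iff_surjective_of_finrank_eq_finrank]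
        · exact hinj
        · rw [Module.finrank_linearMap_self]
      exact ⟨hinj, hsurj⟩
end

section
/- There is a one-to-one correspondence between (2n+1)-dimensional cosymplectic Lie algebras (g, α, ω) and pairs consisting of a 2n-dimensional symplectic Lie algebra (h, ω_h) together with a derivation D of h satisfying ω_h(Dx, y) = -ω_h(x, Dy) for all x,y ∈ h. Concretely, given (g,α,ω) with Reeb vector ξ, the pair is (ker α, ω|_{ker α}) with D = ad_ξ restricted to ker α; conversely, given (h, ω_h, D), the semidirect product g = ℝξ ⋉_D h with α = ξ* and ω extending ω_h with ι_ξ ω = 0 is cosymplectic. -/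
/-- the correspondence between `(2n+1)`-dimensional cosymplectic
Lie algebras `(g, α, ω)` (with Reeb vector `ξ`) and `2n`-dimensional symplectic
Lie algebras `(h, ω_h)` with a derivation `D` that is an infinitesimal
symplectic transformation. Forward direction: `h = ker α`, `D = ad_ξ`.
Backward direction: `g = ℝξ ⋉_D h`, realized on `ℝ × h` with bracket
`[(a,x),(b,y)] = (0, a•D y - b•D x + [x,y])`, `α = ξ*`, `ω` extending `ω_h`. -/
theorem cosymplectic_symplectic_derivation_correspondence :
    (∀ (g : Type) (_ : LieRing g), ∀ (_ : LieAlgebra ℝ g) (_ : Module.Finite ℝ g),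
      ∀ (n : ℕ), Module.finrank ℝ g = 2 * n + 1 →
      ∀ (α : g →ₗ[ℝ] ℝ) (ω : g →ₗ[ℝ] g →ₗ[ℝ] ℝ),
      (∀ x y : g, ω x y = - ω y x) →
      (∀ x y : g, α ⁅x, y⁆ = 0) →
      (∀ x y z : g, ω ⁅x, y⁆ z + ω ⁅y, z⁆ x + ω ⁅z, x⁆ y = 0) →
      Function.Bijective (fun x : g => ω x + α x • α) →
      ∀ ξ : g, α ξ = 1 → ω ξ = 0 →
        -- `(ker α, ω|_{ker α})` is a 2n-dimensional symplectic Lie algebra and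
        -- `ad_ξ` restricts to a derivation of it which is an i.s.t.
        Module.finrank ℝ (LinearMap.ker α) = 2 * n ∧
        (∀ x y : g, α x = 0 → α y = 0 → α ⁅x, y⁆ = 0) ∧
        (∀ x : g, α x = 0 → (∀ y : g, α y = 0 → ω x y = 0) → x = 0) ∧
        (∀ x : g, α x = 0 → α ⁅ξ, x⁆ = 0) ∧
        (∀ x y : g, α x = 0 → α y = 0 → ⁅ξ, ⁅x, y⁆⁆ = ⁅⁅ξ, x⁆, y⁆ + ⁅x, ⁅ξ, y⁆⁆) ∧
        (∀ x y : g, α x = 0 → α y = 0 → ω ⁅ξ, x⁆ y = - ω x ⁅ξ, y⁆)) ∧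
    (∀ (h : Type) (_ : LieRing h), ∀ (_ : LieAlgebra ℝ h) (_ : Module.Finite ℝ h),
      ∀ (n : ℕ), Module.finrank ℝ h = 2 * n →
      ∀ (ωh : h →ₗ[ℝ] h →ₗ[ℝ] ℝ),
      (∀ x y : h, ωh x y = - ωh y x) →
      (∀ x y z : h, ωh ⁅x, y⁆ z + ωh ⁅y, z⁆ x + ωh ⁅z, x⁆ y = 0) →
      (∀ x : h, (∀ y : h, ωh x y = 0) → x = 0) →
      ∀ (D : h →ₗ[ℝ] h),
      (∀ x y : h, D ⁅x, y⁆ = ⁅D x, y⁆ + ⁅x, D y⁆) →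
      (∀ x y : h, ωh (D x) y = - ωh x (D y)) →
      ∀ (B : (ℝ × h) → (ℝ × h) → (ℝ × h)),
      (∀ X Y : ℝ × h, B X Y = (0, X.1 • D Y.2 - Y.1 • D X.2 + ⁅X.2, Y.2⁆)) →
        -- `(ℝ × h, α, ω)` with `α (a,x) = a` and `ω ((a,x),(b,y)) = ωh x y`
        -- is a cosymplectic Lie algebra with Reeb vector `ξ = (1, 0)`.
        (∀ X Y Z : ℝ × h, B (B X Y) Z + B (B Y Z) X + B (B Z X) Y = 0) ∧
        (∀ X Y : ℝ × h, (B X Y).1 = 0) ∧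
        (∀ X Y Z : ℝ × h,
          ωh (B X Y).2 Z.2 + ωh (B Y Z).2 X.2 + ωh (B Z X).2 Y.2 = 0) ∧
        (∀ X : ℝ × h, (∀ Y : ℝ × h, ωh X.2 Y.2 + X.1 * Y.1 = 0) → X = 0) ∧
        (((1 : ℝ), (0 : h)).1 = 1 ∧ ∀ Y : ℝ × h, ωh ((1 : ℝ), (0 : h)).2 Y.2 = 0)) := by
  constructor
  · intro g _ _ _ n hdim α ω hskew hα hcocy hbij ξ hξ hωξ
    refine ⟨?_, fun x y _ _ => hα x y, ?_, fun x _ => hα ξ x, ?_, ?_⟩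
    · have hsurj : Function.Surjective α := fun r => ⟨r • ξ, by simp [hξ]⟩
      have h1 := LinearMap.finrank_range_add_finrank_ker α
      rw [LinearMap.range_eq_top.mpr hsurj] at h1
      simp only [finrank_top, Module.finrank_self] at h1
      omega
    · intro x hx hx0
      have hzero : ω x + α x • α = 0 := by
        ext y
        have hy : y - α y • ξ ∈ LinearMap.ker α := by simp [hξ]
        have := hx0 (y - α y • ξ) (by simpa using hy)
        have hxξ : ω x ξ = 0 := by rw [hskew, hωξ]; simp
        simp only [map_sub, map_smul, hxξ, smul_zero, sub_zero] at this
        simp [hx, this]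
      have := hbij.injective (a₁ := x) (a₂ := 0) (by simpa using hzero)
      exact this
    · intro x y _ _; exact leibniz_lie ξ x y
    · intro x y _ _
      have h1 := hcocy ξ x y
      have h2 : ω ⁅x, y⁆ ξ = 0 := by rw [hskew, hωξ]; simp
      have hy : ⁅y, ξ⁆ = -⁅ξ, y⁆ := neg_eq_iff_eq_neg.mp (lie_skew ξ y)
      have h3 : ω ⁅y, ξ⁆ x = ω x ⁅ξ, y⁆ := by
        rw [hy, map_neg, LinearMap.neg_apply, hskew, neg_neg]
      rw [h2, h3] at h1
      linarith
  · intro h _ _ _ n hdim ωh hskew hJ hnd D hder hist B hB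
    refine ⟨?_, fun X Y => by rw [hB], ?_, ?_, rfl, fun Y => by simp⟩
    · intro X Y Z
      simp only [hB]
      refine Prod.ext (by simp) ?_
      have hjac : ⁅⁅X.2, Y.2⁆, Z.2⁆ + ⁅⁅Y.2, Z.2⁆, X.2⁆ + ⁅⁅Z.2, X.2⁆, Y.2⁆
          = (0 : h) := by
        have := lie_jacobi X.2 Y.2 Z.2
        simp only [← lie_skew _ ⁅X.2, Y.2⁆, ← lie_skew _ ⁅Y.2, Z.2⁆,
          ← lie_skew _ ⁅Z.2, X.2⁆] at this ⊢
        linear_combination (norm := module) -this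
      have key : ∀ a b : h, ⁅a, D b⁆ = -⁅D b, a⁆ := fun a b =>
        neg_eq_iff_eq_neg.mp (lie_skew (D b) a)
      simp only [zero_smul, zero_sub, map_add, map_sub, map_smul, hder,
        lie_add, add_lie, lie_sub, sub_lie, lie_smul, smul_lie, smul_add,
        smul_sub, neg_add_rev, neg_sub, smul_neg, neg_neg]
      simp only [key, smul_neg, neg_neg]
      simp only [Prod.mk_add_mk, Prod.snd, Prod.snd_zero]
      linear_combination (norm := module) hjac
    · intro X Y Z
      simp only [hB, map_add, map_sub, map_smul, LinearMap.add_apply,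
        LinearMap.sub_apply, LinearMap.smul_apply, smul_eq_mul]
      have e1 := hist Y.2 Z.2
      have e2 := hist Z.2 X.2
      have e3 := hist X.2 Y.2
      have s1 := hskew Y.2 (D Z.2)
      have s2 := hskew Z.2 (D X.2)
      have s3 := hskew X.2 (D Y.2)
      have j := hJ X.2 Y.2 Z.2
      linear_combination j + X.1 * (e1 - hskew (D Z.2) Y.2) +
        Y.1 * (e2 - hskew (D X.2) Z.2) + Z.1 * (e3 - hskew (D Y.2) X.2)
    · intro X hX
      have h1 := hX (1, 0)
      simp at h1
      have h2 : X.2 = 0 := by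
        apply hnd
        intro y
        have := hX (0, y)
        simpa [h1] using this
      exact Prod.ext h1 h2
end

section
/- Let (ḡ, ᾱ, ω̄) be a cosymplectic Lie algebra with Reeb vector ξ̄ and h̄ = ker ᾱ. Let g = ḡ ⊕ ⟨e⟩ carry the symplectic form ω = ω̄ + ᾱ∧e* (with e central). A derivation D of g given by D(x) = φ(x) + λ(x)e for x ∈ ḡ and D(e) = v + te is an infinitesimal symplectic transformation of (g, ω) if and only if: (i) φ restricted to h̄ satisfies ω̄(φx, y) = -ω̄(x, φy) for x,y ∈ h̄; (ii) λ(x) = ω̄(x, φ(ξ̄)) for all x ∈ h̄; (iii) ω̄(v, x) = ᾱ(φ(x)) for all x ∈ h̄; (iv) t = -ᾱ(φ(ξ̄)). -/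
/-- Lemma 3.1. For a cosymplectic Lie algebra `(ḡ, ᾱ, ω̄)` with
Reeb vector `ξ̄`, consider `g = ḡ ⊕ ⟨e⟩` (pairs `(x,s)` with `e = (0,1)` central)
with symplectic form `ω = ω̄ + ᾱ∧e*`. A derivation `D(x,s) = (φx + s•v, λx + s·t)`
is an infinitesimal symplectic transformation of `(g, ω)` iff (i) `φ` is an
i.s.t. on `h̄ = ker ᾱ`, (ii) `λ(x) = ω̄(x, φξ̄)` on `h̄`, (iii) `ω̄(v,x) = ᾱ(φx)`
on `h̄`, (iv) `t = -ᾱ(φξ̄)`. -/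
theorem ist_double_extension_iff {g : Type*} [LieRing g] [LieAlgebra ℝ g]
    [Module.Finite ℝ g] (n : ℕ) (hdim : Module.finrank ℝ g = 2 * n + 1)
    (α : g →ₗ[ℝ] ℝ) (ω : g →ₗ[ℝ] g →ₗ[ℝ] ℝ)
    (hskew : ∀ x y : g, ω x y = - ω y x)
    (hclosed : ∀ x y : g, α ⁅x, y⁆ = 0)
    (hcocycle : ∀ x y z : g, ω ⁅x, y⁆ z + ω ⁅y, z⁆ x + ω ⁅z, x⁆ y = 0)
    (hnd : Function.Bijective fun x : g => ω x + α x • α)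
    (ξ : g) (hξ1 : α ξ = 1) (hξ2 : ω ξ = 0)
    (Ω : (g × ℝ) → (g × ℝ) → ℝ)
    (hΩ : ∀ X Y : g × ℝ, Ω X Y = ω X.1 Y.1 + α X.1 * Y.2 - X.2 * α Y.1)
    (φ : g →ₗ[ℝ] g) (lam : g →ₗ[ℝ] ℝ) (v : g) (t : ℝ)
    (D : (g × ℝ) → (g × ℝ))
    (hD : ∀ X : g × ℝ, D X = (φ X.1 + X.2 • v, lam X.1 + X.2 * t))
    (hDer : ∀ X Y : g × ℝ,
        D (⁅X.1, Y.1⁆, (0 : ℝ)) =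
          ((⁅(D X).1, Y.1⁆ + ⁅X.1, (D Y).1⁆ : g), (0 : ℝ))) :
    (∀ X Y : g × ℝ, Ω (D X) Y + Ω X (D Y) = 0) ↔
      ((∀ x y : g, α x = 0 → α y = 0 → ω (φ x) y = - ω x (φ y)) ∧
       (∀ x : g, α x = 0 → lam x = ω x (φ ξ)) ∧
       (∀ x : g, α x = 0 → ω v x = α (φ x)) ∧
       t = - α (φ ξ)) := by

  have hωξ : ∀ z : g, ω z ξ = 0 := fun z => by rw [hskew, hξ2]; simp
  have hξω : ∀ z : g, ω ξ z = 0 := fun z => by rw [hξ2]; simp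
  constructor
  · intro h
    refine ⟨?_, ?_, ?_, ?_⟩
    · intro x y hx hy
      have := h (x, 0) (y, 0)
      simp only [hD, hΩ] at this
      simp [hx, hy] at this
      linarith
    · intro x hx
      have := h (x, 0) (ξ, 0)
      simp only [hD, hΩ] at this
      simp [hx, hξ1, hωξ] at this
      linarith
    · intro x hx
      have := h (0, 1) (x, 0)
      simp only [hD, hΩ] at this
      simp [hx, hξω] at this
      linarith
    · have := h (0, 1) (ξ, 0)
      simp only [hD, hΩ] at this
      simp [hξ1, hωξ, hξω] at this
      linarith
  · rintro ⟨hi, hii, hiii, hiv⟩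
    have hB : ∀ y : g, ω v y - α (φ y) - t * α y = 0 := by
      intro y
      have hy0 : α (y - α y • ξ) = 0 := by simp [hξ1]
      have h2 := hiii _ hy0
      simp only [map_sub, map_smul, LinearMap.sub_apply, LinearMap.smul_apply,
        smul_eq_mul, hωξ] at h2
      rw [hiv]
      linarith
    have hA : ∀ x y : g, ω (φ x) y + ω x (φ y) + α x * lam y - lam x * α y = 0 := by
      intro x y
      have hx0 : α (x - α x • ξ) = 0 := by simp [hξ1]
      have hy0 : α (y - α y • ξ) = 0 := by simp [hξ1]
      have h1 := hi _ _ hx0 hy0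
      have h2 := hii _ hx0
      have h3 := hii _ hy0
      simp only [map_sub, map_smul, LinearMap.sub_apply, LinearMap.smul_apply,
        smul_eq_mul, hξ2, LinearMap.zero_apply, hωξ, mul_zero, sub_zero, zero_sub,
        neg_zero] at h1 h2 h3
      linear_combination h1 + α x * h3 - α y * h2 + α x * hskew (φ ξ) y
    intro X Y
    obtain ⟨x, s⟩ := X
    obtain ⟨y, u⟩ := Y
    simp only [hD, hΩ, map_add, map_smul, LinearMap.add_apply, LinearMap.smul_apply,
      smul_eq_mul]
    linear_combination hA x y + s * hB y - u * hB x + u * hskew x v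
end

section
/- The (2n+1)-dimensional Heisenberg Lie algebra H_{2n+1}, generated by e_1,...,e_n, f_1,...,f_n, z with [e_i, f_i] = z, admits a cosymplectic structure if and only if n = 1. -/
/-- The `(2n+1)`-dimensional Heisenberg Lie algebra: elements `(x, y, s)` stand
for `∑ xᵢ eᵢ + ∑ yᵢ fᵢ + s z`, with the only nonzero brackets `[eᵢ, fᵢ] = z`. -/
def Heis (n : ℕ) : Type := (Fin n → ℝ) × (Fin n → ℝ) × ℝ

instance (n : ℕ) : AddCommGroup (Heis n) :=
  inferInstanceAs (AddCommGroup ((Fin n → ℝ) × (Fin n → ℝ) × ℝ))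

noncomputable instance (n : ℕ) : Module ℝ (Heis n) :=
  inferInstanceAs (Module ℝ ((Fin n → ℝ) × (Fin n → ℝ) × ℝ))

instance (n : ℕ) : Module.Finite ℝ (Heis n) :=
  inferInstanceAs (Module.Finite ℝ ((Fin n → ℝ) × (Fin n → ℝ) × ℝ))

noncomputable instance (n : ℕ) : LieRing (Heis n) where
  bracket x y := (0, 0, ∑ i, (x.1 i * y.2.1 i - y.1 i * x.2.1 i))
  add_lie x y z := by
    refine Prod.ext (zero_add (0 : Fin n → ℝ)).symm
      (Prod.ext (zero_add (0 : Fin n → ℝ)).symm ?_)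
    show (∑ i, ((x + y).1 i * z.2.1 i - z.1 i * (x + y).2.1 i)) =
      (∑ i, (x.1 i * z.2.1 i - z.1 i * x.2.1 i)) +
      (∑ i, (y.1 i * z.2.1 i - z.1 i * y.2.1 i))
    rw [← Finset.sum_add_distrib]
    refine Finset.sum_congr rfl fun i _ => ?_
    show ((x.1 + y.1) i * z.2.1 i - z.1 i * (x.2.1 + y.2.1) i) = _
    simp only [Pi.add_apply]; ring
  lie_add x y z := by
    refine Prod.ext (zero_add (0 : Fin n → ℝ)).symm
      (Prod.ext (zero_add (0 : Fin n → ℝ)).symm ?_)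
    show (∑ i, (x.1 i * (y + z).2.1 i - (y + z).1 i * x.2.1 i)) =
      (∑ i, (x.1 i * y.2.1 i - y.1 i * x.2.1 i)) +
      (∑ i, (x.1 i * z.2.1 i - z.1 i * x.2.1 i))
    rw [← Finset.sum_add_distrib]
    refine Finset.sum_congr rfl fun i _ => ?_
    show (x.1 i * (y.2.1 + z.2.1) i - (y.1 + z.1) i * x.2.1 i) = _
    simp only [Pi.add_apply]; ring
  lie_self x := by
    refine Prod.ext rfl (Prod.ext rfl ?_)
    show (∑ i, (x.1 i * x.2.1 i - x.1 i * x.2.1 i)) = 0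
    simp
  leibniz_lie x y z := by
    refine Prod.ext (zero_add (0 : Fin n → ℝ)).symm
      (Prod.ext (zero_add (0 : Fin n → ℝ)).symm ?_)
    show (∑ i, (x.1 i * (0 : Fin n → ℝ) i - (0 : Fin n → ℝ) i * x.2.1 i)) =
      (∑ i, ((0 : Fin n → ℝ) i * z.2.1 i - z.1 i * (0 : Fin n → ℝ) i)) +
      (∑ i, (y.1 i * (0 : Fin n → ℝ) i - (0 : Fin n → ℝ) i * y.2.1 i))
    simp

noncomputable instance (n : ℕ) : LieAlgebra ℝ (Heis n) where
  lie_smul c x y := by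
    refine Prod.ext (smul_zero c).symm (Prod.ext (smul_zero c).symm ?_)
    show (∑ i, (x.1 i * (c • y).2.1 i - (c • y).1 i * x.2.1 i)) =
      c * (∑ i, (x.1 i * y.2.1 i - y.1 i * x.2.1 i))
    rw [Finset.mul_sum]
    refine Finset.sum_congr rfl fun i _ => ?_
    show (x.1 i * (c • y.2.1) i - (c • y.1) i * x.2.1 i) = _
    simp only [Pi.smul_apply, smul_eq_mul]; ring

/-! The cocycle identity on `(eᵢ, fᵢ, w)` gives `ω z w = w.1 i * ω z (e i) + w.2.1 i * ω z (f i)`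
for every `i`; for `n ≥ 2` a second index shows that `ι_z ω = 0`. As `z = [eᵢ, fᵢ]` also
`α z = 0`, so `z ≠ 0` lies in the kernel of `x ↦ ι_x ω + α x • α`. For `n = 1`,
`α = e*` and `ω = f* ∧ z*` is a cosymplectic structure. -/

structure IsCosymplectic {K L : Type*} [CommRing K] [LieRing L] [LieAlgebra K L]
    (α : L →ₗ[K] K) (ω : L →ₗ[K] L →ₗ[K] K) : Prop where
  skew : ∀ x y, ω x y = - ω y x
  map_lie : ∀ x y : L, α ⁅x, y⁆ = 0
  cocycle : ∀ x y z : L, ω ⁅x, y⁆ z + ω ⁅y, z⁆ x + ω ⁅z, x⁆ y = 0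
  bijective : Function.Bijective (fun x => ω x + α x • α)

theorem IsCosymplectic.of_nondegenerate {K L : Type*} [Field K] [LieRing L] [LieAlgebra K L]
    [FiniteDimensional K L] {α : L →ₗ[K] K} {ω : L →ₗ[K] L →ₗ[K] K}
    (skew : ∀ x y, ω x y = - ω y x) (map_lie : ∀ x y : L, α ⁅x, y⁆ = 0)
    (cocycle : ∀ x y z : L, ω ⁅x, y⁆ z + ω ⁅y, z⁆ x + ω ⁅z, x⁆ y = 0)
    (nondegenerate : ∀ x, ω x + α x • α = 0 → x = 0) :
    IsCosymplectic α ω := by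
  have hinj : Function.Injective (ω + α.smulRight α) :=
    LinearMap.ker_eq_bot.mp (LinearMap.ker_eq_bot'.mpr nondegenerate)
  refine ⟨skew, map_lie, cocycle, hinj, ?_⟩
  exact (LinearMap.injective_iff_surjective_of_finrank_eq_finrank
    Subspace.dual_finrank_eq.symm).mp hinj

namespace Heis

variable {n : ℕ}

@[ext]
theorem ext {x y : Heis n} (h₁ : x.1 = y.1) (h₂ : x.2.1 = y.2.1) (h₃ : x.2.2 = y.2.2) :
    x = y :=
  Prod.ext h₁ (Prod.ext h₂ h₃)

@[simp] theorem smul_fst (c : ℝ) (x : Heis n) : (c • x).1 = c • x.1 := rfl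
@[simp] theorem smul_snd_fst (c : ℝ) (x : Heis n) : (c • x).2.1 = c • x.2.1 := rfl
@[simp] theorem smul_snd_snd (c : ℝ) (x : Heis n) : (c • x).2.2 = c * x.2.2 := rfl
@[simp] theorem neg_fst (x : Heis n) : (-x).1 = -x.1 := rfl
@[simp] theorem neg_snd_fst (x : Heis n) : (-x).2.1 = -x.2.1 := rfl
@[simp] theorem neg_snd_snd (x : Heis n) : (-x).2.2 = -x.2.2 := rfl

@[simp] theorem zero_fst : (0 : Heis n).1 = 0 := rfl
@[simp] theorem zero_snd_fst : (0 : Heis n).2.1 = 0 := rfl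
@[simp] theorem zero_snd_snd : (0 : Heis n).2.2 = 0 := rfl

@[simp] theorem lie_fst (x y : Heis n) : ⁅x, y⁆.1 = 0 := rfl
@[simp] theorem lie_snd_fst (x y : Heis n) : ⁅x, y⁆.2.1 = 0 := rfl
theorem lie_snd_snd (x y : Heis n) :
    ⁅x, y⁆.2.2 = ∑ i, (x.1 i * y.2.1 i - y.1 i * x.2.1 i) := rfl

def e (i : Fin n) : Heis n := (Pi.single i 1, 0, 0)
def f (i : Fin n) : Heis n := (0, Pi.single i 1, 0)
def z : Heis n := (0, 0, 1)

@[simp] theorem e_fst (i : Fin n) : (e i).1 = Pi.single i 1 := rfl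
@[simp] theorem e_snd_fst (i : Fin n) : (e i).2.1 = 0 := rfl
@[simp] theorem e_snd_snd (i : Fin n) : (e i).2.2 = 0 := rfl
@[simp] theorem f_fst (i : Fin n) : (f i).1 = 0 := rfl
@[simp] theorem f_snd_fst (i : Fin n) : (f i).2.1 = Pi.single i 1 := rfl
@[simp] theorem f_snd_snd (i : Fin n) : (f i).2.2 = 0 := rfl
@[simp] theorem z_fst : (z : Heis n).1 = 0 := rfl
@[simp] theorem z_snd_fst : (z : Heis n).2.1 = 0 := rfl
@[simp] theorem z_snd_snd : (z : Heis n).2.2 = 1 := rfl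

theorem z_ne_zero : (z : Heis n) ≠ 0 := fun h => one_ne_zero congr(($h).2.2)

theorem lie_e_f (i : Fin n) : ⁅e i, f i⁆ = z := by
  ext <;> simp [lie_snd_snd, Pi.single_apply]

theorem lie_f_left (i : Fin n) (w : Heis n) : ⁅f i, w⁆ = (-w.1 i) • z := by
  ext <;> simp [lie_snd_snd, Pi.single_apply]

theorem lie_e_right (i : Fin n) (w : Heis n) : ⁅w, e i⁆ = (-w.2.1 i) • z := by
  ext <;> simp [lie_snd_snd, Pi.single_apply]

theorem cocycle_z_apply {ω : Heis n →ₗ[ℝ] Heis n →ₗ[ℝ] ℝ}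
    (hω : ∀ x y w : Heis n, ω ⁅x, y⁆ w + ω ⁅y, w⁆ x + ω ⁅w, x⁆ y = 0)
    (i : Fin n) (w : Heis n) :
    ω z w = w.1 i * ω z (e i) + w.2.1 i * ω z (f i) := by
  have h := hω (e i) (f i) w
  rw [lie_e_f, lie_f_left, lie_e_right, map_smul, map_smul] at h
  simp only [LinearMap.smul_apply, smul_eq_mul, neg_mul] at h
  linarith

/-- `cocycle_z_apply` at an index `j ≠ i` kills `ω z (e i)` and `ω z (f i)`: this is where
`n ≥ 2` enters. -/
theorem cocycle_z_eq_zero {ω : Heis n →ₗ[ℝ] Heis n →ₗ[ℝ] ℝ}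
    (hω : ∀ x y w : Heis n, ω ⁅x, y⁆ w + ω ⁅y, w⁆ x + ω ⁅w, x⁆ y = 0)
    (hn : 2 ≤ n) : ω z = 0 := by
  have : Nontrivial (Fin n) := Fin.nontrivial_iff_two_le.mpr hn
  have hzero : ∀ i, ω z (e i) = 0 ∧ ω z (f i) = 0 := fun i => by
    obtain ⟨j, hj⟩ := exists_ne i
    constructor
    · simpa [Pi.single_apply, hj] using cocycle_z_apply hω j (e i)
    · simpa [Pi.single_apply, hj] using cocycle_z_apply hω j (f i)
  ext w
  rw [cocycle_z_apply hω ⟨0, by omega⟩ w, (hzero _).1, (hzero _).2]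
  simp

theorem not_isCosymplectic (hn : 2 ≤ n) (α : Heis n →ₗ[ℝ] ℝ)
    (ω : Heis n →ₗ[ℝ] Heis n →ₗ[ℝ] ℝ) : ¬ IsCosymplectic α ω := by
  intro h
  have hαz : α z = 0 := by simpa [lie_e_f] using h.map_lie (e ⟨0, by omega⟩) (f ⟨0, by omega⟩)
  apply z_ne_zero
  exact h.bijective.1 (by simp [cocycle_z_eq_zero h.cocycle hn, hαz])

def eCoord (i : Fin n) : Module.Dual ℝ (Heis n) where
  toFun x := x.1 i
  map_add' _ _ := rfl
  map_smul' _ _ := rfl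

def fCoord (i : Fin n) : Module.Dual ℝ (Heis n) where
  toFun x := x.2.1 i
  map_add' _ _ := rfl
  map_smul' _ _ := rfl

def zCoord : Module.Dual ℝ (Heis n) where
  toFun x := x.2.2
  map_add' _ _ := rfl
  map_smul' _ _ := rfl

@[simp] theorem eCoord_apply (i : Fin n) (x : Heis n) : eCoord i x = x.1 i := rfl
@[simp] theorem fCoord_apply (i : Fin n) (x : Heis n) : fCoord i x = x.2.1 i := rfl
@[simp] theorem zCoord_apply (x : Heis n) : zCoord x = x.2.2 := rfl

theorem isCosymplectic_one :
    IsCosymplectic (eCoord 0 : Module.Dual ℝ (Heis 1))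
      ((fCoord 0).smulRight zCoord - zCoord.smulRight (fCoord 0)) := by
  refine .of_nondegenerate (fun x y => ?_) (fun x y => ?_) (fun x y w => ?_) (fun x hx => ?_)
  · simp only [LinearMap.sub_apply, LinearMap.coe_smulRight, fCoord_apply, zCoord_apply,
      LinearMap.smul_apply, smul_eq_mul]
    ring
  · simp
  · simp only [LinearMap.sub_apply, LinearMap.coe_smulRight, fCoord_apply, zCoord_apply,
      LinearMap.smul_apply, lie_snd_fst, lie_snd_snd, Fin.sum_univ_one, Pi.zero_apply, smul_eq_mul]
    ring
  · have he : x.1 0 = 0 := by simpa using LinearMap.congr_fun hx (e 0)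
    have hf : x.2.1 0 = 0 := by simpa using LinearMap.congr_fun hx z
    have hz : x.2.2 = 0 := by simpa using LinearMap.congr_fun hx (f 0)
    ext : 1 <;> simp [funext_iff, Fin.forall_fin_one, he, hf, hz]

end Heis

/-- The Heisenberg Lie algebra `H_{2n+1}` (with `n ≥ 1`) admits a
cosymplectic structure if and only if `n = 1`. -/
theorem heisenberg_cosymplectic_iff (n : ℕ) (hn : 1 ≤ n) :
    (∃ (α : Heis n →ₗ[ℝ] ℝ) (ω : Heis n →ₗ[ℝ] Heis n →ₗ[ℝ] ℝ),
        (∀ x y : Heis n, ω x y = - ω y x) ∧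
        (∀ x y : Heis n, α ⁅x, y⁆ = 0) ∧
        (∀ x y z : Heis n, ω ⁅x, y⁆ z + ω ⁅y, z⁆ x + ω ⁅z, x⁆ y = 0) ∧
        Function.Bijective (fun x : Heis n => ω x + α x • α)) ↔ n = 1 := by
  constructor
  · rintro ⟨α, ω, skew, map_lie, cocycle, bijective⟩
    by_contra hne
    exact Heis.not_isCosymplectic (by omega) α ω ⟨skew, map_lie, cocycle, bijective⟩
  · rintro rfl
    obtain ⟨skew, map_lie, cocycle, bijective⟩ := Heis.isCosymplectic_one
    exact ⟨_, _, skew, map_lie, cocycle, bijective⟩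
end

section
/- On the 3-dimensional Lie algebra g with brackets [e_1, e_3] = -e_2, [e_2, e_3] = e_1 (Bianchi VII_0), the pair α = λe^3 (λ ≠ 0), ω = e^1∧e^2 is a cosymplectic structure, and the left-symmetric product associated to it (defined by Φ(x·y)(z) = -Φ(y)([x,z])) is given by e_1·e_1 = (1/λ²)e_3, e_2·e_2 = (1/λ²)e_3, e_3·e_1 = e_2, e_3·e_2 = -e_1, with all other products of basis vectors zero. In particular, this product is left-symmetric and its commutator recovers the Lie bracket. -/
/-- The 3-dimensional Lie algebra `g_{3.5}^0` (Bianchi VII₀): basis `e₁,e₂,e₃`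
with `[e₁,e₃] = -e₂`, `[e₂,e₃] = e₁`. An element `(a,b,c)` stands for
`a e₁ + b e₂ + c e₃`, so `[x,y] = (x₂y₃ - x₃y₂, x₃y₁ - x₁y₃, 0)`. -/
def G350 : Type := ℝ × ℝ × ℝ

noncomputable instance : AddCommGroup G350 := inferInstanceAs (AddCommGroup (ℝ × ℝ × ℝ))
noncomputable instance : Module ℝ G350 := inferInstanceAs (Module ℝ (ℝ × ℝ × ℝ))
instance : Module.Finite ℝ G350 := inferInstanceAs (Module.Finite ℝ (ℝ × ℝ × ℝ))

noncomputable instance : LieRing G350 where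
  bracket x y := (x.2.1 * y.2.2 - x.2.2 * y.2.1, x.2.2 * y.1 - x.1 * y.2.2, 0)
  add_lie x y z := by
    refine Prod.ext ?_ (Prod.ext ?_ (zero_add (0:ℝ)).symm)
    · show (x.2.1 + y.2.1) * z.2.2 - (x.2.2 + y.2.2) * z.2.1 =
        (x.2.1 * z.2.2 - x.2.2 * z.2.1) + (y.2.1 * z.2.2 - y.2.2 * z.2.1)
      ring
    · show (x.2.2 + y.2.2) * z.1 - (x.1 + y.1) * z.2.2 =
        (x.2.2 * z.1 - x.1 * z.2.2) + (y.2.2 * z.1 - y.1 * z.2.2)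
      ring
  lie_add x y z := by
    refine Prod.ext ?_ (Prod.ext ?_ (zero_add (0:ℝ)).symm)
    · show x.2.1 * (y.2.2 + z.2.2) - x.2.2 * (y.2.1 + z.2.1) =
        (x.2.1 * y.2.2 - x.2.2 * y.2.1) + (x.2.1 * z.2.2 - x.2.2 * z.2.1)
      ring
    · show x.2.2 * (y.1 + z.1) - x.1 * (y.2.2 + z.2.2) =
        (x.2.2 * y.1 - x.1 * y.2.2) + (x.2.2 * z.1 - x.1 * z.2.2)
      ring
  lie_self x := by
    refine Prod.ext ?_ (Prod.ext ?_ rfl)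
    · show x.2.1 * x.2.2 - x.2.2 * x.2.1 = 0; ring
    · show x.2.2 * x.1 - x.1 * x.2.2 = 0; ring
  leibniz_lie x y z := by
    refine Prod.ext ?_ (Prod.ext ?_ (zero_add (0:ℝ)).symm)
    · show x.2.1 * 0 - x.2.2 * (y.2.2 * z.1 - y.1 * z.2.2) =
        ((x.2.2 * y.1 - x.1 * y.2.2) * z.2.2 - 0 * z.2.1) +
        (y.2.1 * 0 - y.2.2 * (x.2.2 * z.1 - x.1 * z.2.2))
      ring
    · show x.2.2 * (y.2.1 * z.2.2 - y.2.2 * z.2.1) - x.1 * 0 =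
        (0 * z.1 - (x.2.1 * y.2.2 - x.2.2 * y.2.1) * z.2.2) +
        (y.2.2 * (x.2.1 * z.2.2 - x.2.2 * z.2.1) - y.1 * 0)
      ring

noncomputable instance : LieAlgebra ℝ G350 where
  lie_smul c x y := by
    refine Prod.ext ?_ (Prod.ext ?_ (smul_zero c).symm)
    · show x.2.1 * (c * y.2.2) - x.2.2 * (c * y.2.1) =
        c * (x.2.1 * y.2.2 - x.2.2 * y.2.1)
      ring
    · show x.2.2 * (c * y.1) - x.1 * (c * y.2.2) =
        c * (x.2.2 * y.1 - x.1 * y.2.2)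
      ring

/-!
Write `Φ(x) = ι_x ω + α(x) α`. The defining identity says `L_x = -Φ⁻¹ ∘ ad_xᵀ ∘ Φ`, so for any
injective `Φ` the Jacobi identity makes the associator symmetric as soon as `x·y - y·x = [x,y]`;
and the commutator identity, read through `Φ`, is exactly the closedness of `α` and `ω`.
On `g_{3.5}^0` it remains to check that `Φ` is injective and that the explicit product satisfies
the defining identity, which by injectivity determines the product.
-/

open Function

section Flat

variable {R M : Type*} [CommSemiring R] [AddCommMonoid M] [Module R M]

/-- The paper's `Φ`. -/
def cosymplecticFlat (α : Module.Dual R M) (ω : M →ₗ[R] Module.Dual R M) :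
    M →ₗ[R] Module.Dual R M :=
  ω + α.smulRight α

@[simp]
theorem cosymplecticFlat_apply (α : Module.Dual R M) (ω : M →ₗ[R] Module.Dual R M) (x y : M) :
    cosymplecticFlat α ω x y = ω x y + α x * α y :=
  rfl

end Flat

section Cosymplectic

variable {R L : Type*} [CommRing R] [LieRing L] [LieAlgebra R L]

structure IsCosymplectic_s17 (α : Module.Dual R L) (ω : L →ₗ[R] Module.Dual R L) : Prop where
  antisymm : ∀ x y : L, ω x y = -ω y x
  alpha_lie : ∀ x y : L, α ⁅x, y⁆ = 0
  omega_cocycle : ∀ x y z : L, ω ⁅x, y⁆ z + ω ⁅y, z⁆ x + ω ⁅z, x⁆ y = 0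
  flat_bijective : Bijective (cosymplecticFlat α ω)

theorem IsCosymplectic_s17.flat_lie_apply {α : Module.Dual R L} {ω : L →ₗ[R] Module.Dual R L}
    (h : IsCosymplectic_s17 α ω) (x y z : L) :
    cosymplecticFlat α ω ⁅x, y⁆ z =
      cosymplecticFlat α ω x ⁅y, z⁆ - cosymplecticFlat α ω y ⁅x, z⁆ := by
  simp only [cosymplecticFlat_apply, h.alpha_lie, mul_zero, zero_mul, add_zero]
  rw [h.antisymm x, h.antisymm y, ← lie_skew x z, map_neg, LinearMap.neg_apply]
  linear_combination h.omega_cocycle x y z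

def IsAssociatedProduct (Φ : L →ₗ[R] Module.Dual R L) (mul : L → L → L) : Prop :=
  ∀ x y z, Φ (mul x y) z = -Φ y ⁅x, z⁆

namespace IsAssociatedProduct

variable {Φ : L →ₗ[R] Module.Dual R L} {mul : L → L → L}

theorem unique (hΦ : Injective Φ) (h : IsAssociatedProduct Φ mul) {mul' : L → L → L}
    (h' : IsAssociatedProduct Φ mul') : mul = mul' := by
  funext x y
  exact hΦ (LinearMap.ext fun z => by rw [h, h'])

theorem mul_sub_mul_eq_lie (hΦ : Injective Φ) (h : IsAssociatedProduct Φ mul)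
    (hΦ_lie : ∀ x y z, Φ ⁅x, y⁆ z = Φ x ⁅y, z⁆ - Φ y ⁅x, z⁆) (x y : L) :
    mul x y - mul y x = ⁅x, y⁆ :=
  hΦ (LinearMap.ext fun z => by
    rw [map_sub, LinearMap.sub_apply, h, h, hΦ_lie]
    ring)

theorem leftSymmetric (hΦ : Injective Φ) (h : IsAssociatedProduct Φ mul)
    (hcomm : ∀ x y, mul x y - mul y x = ⁅x, y⁆) (x y z : L) :
    mul (mul x y) z - mul x (mul y z) = mul (mul y x) z - mul y (mul x z) := by
  refine hΦ (LinearMap.ext fun w => ?_)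
  have hjacobi : Φ z ⁅mul x y, w⁆ =
      Φ z ⁅mul y x, w⁆ + Φ z ⁅x, ⁅y, w⁆⁆ - Φ z ⁅y, ⁅x, w⁆⁆ := by
    rw [sub_eq_iff_eq_add'.mp (hcomm x y), add_lie, lie_lie, map_add, map_sub]
    ring
  simp only [map_sub, LinearMap.sub_apply, h _ _ _]
  linear_combination -hjacobi

end IsAssociatedProduct

end Cosymplectic

namespace G350

theorem ext' {x y : G350} (h₁ : x.1 = y.1) (h₂ : x.2.1 = y.2.1) (h₃ : x.2.2 = y.2.2) : x = y :=
  Prod.ext h₁ (Prod.ext h₂ h₃)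

theorem lie_def (x y : G350) :
    ⁅x, y⁆ = ((x.2.1 * y.2.2 - x.2.2 * y.2.1, x.2.2 * y.1 - x.1 * y.2.2, 0) : G350) :=
  rfl

variable (lam : ℝ) {α : G350 →ₗ[ℝ] ℝ} {ω : G350 →ₗ[ℝ] G350 →ₗ[ℝ] ℝ}

theorem isCosymplectic (hlam : lam ≠ 0) (hα : ∀ v : G350, α v = lam * v.2.2)
    (hω : ∀ v w : G350, ω v w = v.1 * w.2.1 - w.1 * v.2.1) : IsCosymplectic_s17 α ω := by
  have hinj : Injective (cosymplecticFlat α ω) := by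
    refine (injective_iff_map_eq_zero _).2 fun x hx => ?_
    have hxw (w : G350) : x.1 * w.2.1 - w.1 * x.2.1 + lam * x.2.2 * (lam * w.2.2) = 0 := by
      simpa only [cosymplecticFlat_apply, hα, hω, LinearMap.zero_apply] using LinearMap.congr_fun hx w
    refine ext' (?_ : x.1 = 0) (?_ : x.2.1 = 0) (?_ : x.2.2 = 0)
    · simpa using hxw (0, 1, 0)
    · simpa using hxw (1, 0, 0)
    · simpa [hlam] using hxw (0, 0, 1)
  refine ⟨fun x y => ?_, fun x y => ?_, fun x y z => ?_, hinj, ?_⟩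
  · rw [hω, hω]; ring
  · rw [hα]; exact mul_zero lam
  · simp only [hω]
    simp only [lie_def]
    ring
  · exact (LinearMap.injective_iff_surjective_of_finrank_eq_finrank
      Subspace.dual_finrank_eq.symm).1 hinj

noncomputable def leftSymmetricMul (x y : G350) : G350 :=
  (-(x.2.2 * y.2.1), x.2.2 * y.1, (x.1 * y.1 + x.2.1 * y.2.1) / lam ^ 2)

theorem isAssociatedProduct_leftSymmetricMul (hlam : lam ≠ 0)
    (hα : ∀ v : G350, α v = lam * v.2.2)
    (hω : ∀ v w : G350, ω v w = v.1 * w.2.1 - w.1 * v.2.1) :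
    IsAssociatedProduct (cosymplecticFlat α ω) (leftSymmetricMul lam) := by
  intro x y z
  simp only [cosymplecticFlat_apply, hα, hω]
  simp only [lie_def, leftSymmetricMul]
  field_simp
  ring

end G350

/-- On `g_{3.5}^0`, the pair `α = λe³` (`λ ≠ 0`), `ω = e¹∧e²` is a
cosymplectic structure, and the associated left-symmetric product (defined by
`Φ(x·y)(z) = -Φ(y)([x,z])`) is `e₁·e₁ = e₂·e₂ = (1/λ²)e₃`, `e₃·e₁ = e₂`,
`e₃·e₂ = -e₁`, all other products of basis vectors zero; it is left-symmetric
and its commutator recovers the Lie bracket. -/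
theorem g350_cosymplectic_product (lam : ℝ) (hlam : lam ≠ 0)
    (α : G350 →ₗ[ℝ] ℝ) (ω : G350 →ₗ[ℝ] G350 →ₗ[ℝ] ℝ)
    (hα : ∀ v : G350, α v = lam * v.2.2)
    (hω : ∀ v w : G350, ω v w = v.1 * w.2.1 - w.1 * v.2.1)
    (mul : G350 → G350 → G350)
    (hmul : ∀ x y z : G350,
        ω (mul x y) z + α (mul x y) * α z = - (ω y ⁅x, z⁆ + α y * α ⁅x, z⁆)) :
    (∀ x y : G350, ω x y = - ω y x) ∧
    (∀ x y : G350, α ⁅x, y⁆ = 0) ∧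
    (∀ x y z : G350, ω ⁅x, y⁆ z + ω ⁅y, z⁆ x + ω ⁅z, x⁆ y = 0) ∧
    Function.Bijective (fun x : G350 => ω x + α x • α) ∧
    mul ((1,0,0) : G350) ((1,0,0) : G350) = ((0, 0, 1 / lam ^ 2) : G350) ∧
    mul ((0,1,0) : G350) ((0,1,0) : G350) = ((0, 0, 1 / lam ^ 2) : G350) ∧
    mul ((0,0,1) : G350) ((1,0,0) : G350) = ((0,1,0) : G350) ∧
    mul ((0,0,1) : G350) ((0,1,0) : G350) = ((-1,0,0) : G350) ∧
    mul ((1,0,0) : G350) ((0,1,0) : G350) = 0 ∧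
    mul ((0,1,0) : G350) ((1,0,0) : G350) = 0 ∧
    mul ((1,0,0) : G350) ((0,0,1) : G350) = 0 ∧
    mul ((0,1,0) : G350) ((0,0,1) : G350) = 0 ∧
    mul ((0,0,1) : G350) ((0,0,1) : G350) = 0 ∧
    (∀ x y z : G350,
      mul (mul x y) z - mul x (mul y z) = mul (mul y x) z - mul y (mul x z)) ∧
    (∀ x y : G350, mul x y - mul y x = ⁅x, y⁆) := by
  have hcosymp := G350.isCosymplectic lam hlam hα hω
  have hinj := hcosymp.flat_bijective.injective
  have hassoc : IsAssociatedProduct (cosymplecticFlat α ω) mul := hmul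
  have hcomm := hassoc.mul_sub_mul_eq_lie hinj hcosymp.flat_lie_apply
  have hsymm := hassoc.leftSymmetric hinj hcomm
  obtain rfl : mul = G350.leftSymmetricMul lam :=
    hassoc.unique hinj (G350.isAssociatedProduct_leftSymmetricMul lam hlam hα hω)
  refine ⟨hcosymp.antisymm, hcosymp.alpha_lie, hcosymp.omega_cocycle, hcosymp.flat_bijective,
    ?_, ?_, ?_, ?_, ?_, ?_, ?_, ?_, ?_, hsymm, hcomm⟩ <;>
  simp [G350.leftSymmetricMul] <;> rfl
end
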